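/- (CR estimator biased as demand grows, homogeneous market.) Let 0 < φ < φ̃, ψ = φ·F(φ), ψ̃ = φ̃·F(φ̃) (so 0 < ψ < ψ̃), and a ∈ (0,1). Define the CR bias b(λ) = λ·(ψ̃ − ψ)·F(λ·(aψ̃ + (1−a)ψ)) − (exp(−λψ) − exp(−λψ̃)). Then as λ → ∞, b(λ) → (ψ̃ − ψ)/(aψ̃ + (1−a)ψ), which is strictly positive. -/

import Mathlib

/-! Since `x * F x = 1 - exp (-x)`, the map `x ↦ x * F x` is strictly increasing and positive on
`(0, ∞)`, and `λ * F (λ * c) = (1 - exp (-(λ * c))) / c → 1 / c` for `c > 0`, while both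
exponential terms of the bias vanish as `λ → ∞`. -/

noncomputable def F : ℝ → ℝ := fun x => if x = 0 then 1 else (1 - Real.exp (-x)) / x

open Filter Topology Real

lemma mul_F (x : ℝ) : x * F x = 1 - exp (-x) := by
  unfold F
  rcases eq_or_ne x 0 with h | h
  · simp [h]
  · rw [if_neg h, mul_div_cancel₀ _ h]

lemma strictMono_mul_F : StrictMono fun x => x * F x := by
  intro x y hxy
  simp only [mul_F, sub_lt_sub_iff_left, exp_lt_exp, neg_lt_neg_iff]
  exact hxy

lemma mul_F_pos {x : ℝ} (hx : 0 < x) : 0 < x * F x := by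
  simpa using strictMono_mul_F hx

lemma tendsto_exp_neg_mul_atTop {k : ℝ} (hk : 0 < k) :
    Tendsto (fun lam : ℝ => exp (-(lam * k))) atTop (𝓝 0) :=
  tendsto_exp_neg_atTop_nhds_zero.comp (tendsto_id.atTop_mul_const hk)

lemma tendsto_mul_F_mul_atTop {c : ℝ} (hc : 0 < c) :
    Tendsto (fun lam : ℝ => lam * F (lam * c)) atTop (𝓝 c⁻¹) := by
  have h : Tendsto (fun lam : ℝ => c⁻¹ * (1 - exp (-(lam * c)))) atTop (𝓝 (c⁻¹ * (1 - 0))) :=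
    (tendsto_const_nhds.sub (tendsto_exp_neg_mul_atTop hc)).const_mul _
  rw [sub_zero, mul_one] at h
  refine h.congr fun lam => ?_
  rw [← mul_F, mul_comm lam c, mul_assoc, inv_mul_cancel_left₀ hc.ne']

theorem stmt_12 (φ φt a : ℝ) (hφ : 0 < φ) (hlt : φ < φt) (ha : a ∈ Set.Ioo (0:ℝ) 1) :
    Filter.Tendsto (fun lam : ℝ =>
        lam * (φt * F φt - φ * F φ)
            * F (lam * (a * (φt * F φt) + (1 - a) * (φ * F φ)))
          - (Real.exp (-(lam * (φ * F φ))) - Real.exp (-(lam * (φt * F φt)))))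
      Filter.atTop
      (nhds ((φt * F φt - φ * F φ) / (a * (φt * F φt) + (1 - a) * (φ * F φ)))) ∧
    0 < (φt * F φt - φ * F φ) / (a * (φt * F φt) + (1 - a) * (φ * F φ)) := by
  obtain ⟨ha0, ha1⟩ := ha
  set ψ := φ * F φ
  set ψt := φt * F φt
  have hψ : 0 < ψ := mul_F_pos hφ
  have hψt : ψ < ψt := strictMono_mul_F hlt
  have hc : 0 < a * ψt + (1 - a) * ψ := by nlinarith
  refine ⟨?_, div_pos (sub_pos.mpr hψt) hc⟩
  have h := ((tendsto_mul_F_mul_atTop hc).const_mul (ψt - ψ)).sub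
    ((tendsto_exp_neg_mul_atTop hψ).sub (tendsto_exp_neg_mul_atTop (hψ.trans hψt)))
  rw [sub_zero, sub_zero, ← div_eq_mul_inv] at h
  refine h.congr fun lam => ?_
  ring
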